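/- arXiv:1508.01297 — 4 statements merged into one kernel-verified Lean document; each statement's English description precedes it below -/
import Mathlib

section
/- If A is a normalized potential whose transfer operator L_A satisfies the Ruelle–Perron–Frobenius hypotheses with spectral gap, then the subspace C = {g − g∘T + c : g ∈ X(Ω), c ∈ ℝ} is closed in X(Ω). -/
/-!
Here `Tc f = f ∘ T`, `e` is the constant function `1` and `μ f = ∫ f dμ_A`.
Let `P f = f - μ(f) e` be the projection onto mean-zero functions. The spectral gap makes
`R = ∑ₙ Lⁿ P` converge in operator norm, and for mean-zero `g` the series `∑ₙ Lⁿ (g - Tc g)`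
telescopes to `-Tc g` because `L Tc = 1`. So `L R` inverts the coboundary map on mean-zero
functions, and `f` is a coboundary plus a constant exactly when `P f = (1 - Tc) (-L R P f)`:
the set is the kernel of the bounded operator `P + (1 - Tc) L R P`.
-/

open Filter Topology

section

variable {𝕜 X : Type*} [NontriviallyNormedField 𝕜] [NormedAddCommGroup X] [NormedSpace 𝕜 X]

theorem summable_of_norm_apply_le_geometric {E F : Type*} [NormedAddCommGroup E]
    [NormedSpace 𝕜 E] [NormedAddCommGroup F] [NormedSpace 𝕜 F] [CompleteSpace F]
    {A : ℕ → E →L[𝕜] F} {C r : ℝ} (hC : 0 ≤ C) (hr0 : 0 ≤ r) (hr1 : r < 1)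
    (hA : ∀ n x, ‖A n x‖ ≤ C * r ^ n * ‖x‖) : Summable A :=
  .of_norm_bounded ((summable_geometric_of_lt_one hr0 hr1).mul_left C) fun n ↦
    (A n).opNorm_le_bound (by positivity) (hA n)

theorem tsum_pow_apply_sub_eq_neg {L T : X →L[𝕜] X} (hLT : ∀ f, L (T f) = f) {g : X}
    (hsum : Summable fun n : ℕ ↦ (L ^ n) (g - T g))
    (hlim : Tendsto (fun n : ℕ ↦ (L ^ n) (T g)) atTop (𝓝 0)) :
    ∑' n, (L ^ n) (g - T g) = -T g := by
  have hpartial : ∀ n, ∑ i ∈ Finset.range n, (L ^ i) (g - T g) = (L ^ n) (T g) - T g := by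
    intro n
    have hstep : ∀ i, (L ^ i) (g - T g) = (L ^ (i + 1)) (T g) - (L ^ i) (T g) := fun i ↦ by
      rw [pow_succ, mul_apply_eq_comp, hLT, map_sub]
    rw [Finset.sum_congr rfl fun i _ ↦ hstep i, Finset.sum_range_sub (fun i ↦ (L ^ i) (T g)),
      pow_zero, one_apply_eq_self]
  refine tendsto_nhds_unique hsum.hasSum.tendsto_sum_nat ?_
  simpa only [hpartial, zero_sub] using hlim.sub_const (T g)

theorem apply_one_sub_smulRight_apply_eq_zero {μ : X →L[𝕜] 𝕜} {e : X} (hμe : μ e = 1)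
    (f : X) : μ ((1 - μ.smulRight e) f) = 0 := by
  simp [hμe]

theorem one_sub_smulRight_apply_of_eq_zero {μ : X →L[𝕜] 𝕜} (e : X) {f : X} (hf : μ f = 0) :
    (1 - μ.smulRight e) f = f := by
  simp [hf]

theorem hasSum_pow_apply_of_norm_pow_le [CompleteSpace X] {L : X →L[𝕜] X} {μ : X →L[𝕜] 𝕜}
    {e : X} (hμe : μ e = 1) {D r : ℝ} (hD : 0 ≤ D) (hr0 : 0 ≤ r) (hr1 : r < 1)
    (hgap : ∀ (n : ℕ) (f : X), μ f = 0 → ‖(L ^ n) f‖ ≤ D * r ^ n * ‖f‖) {h : X}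
    (hh : μ h = 0) :
    HasSum (fun n ↦ (L ^ n) h) ((∑' n : ℕ, L ^ n * (1 - μ.smulRight e) : X →L[𝕜] X) h) := by
  set P : X →L[𝕜] X := 1 - μ.smulRight e
  have hbound : ∀ n f, ‖(L ^ n * P) f‖ ≤ D * ‖P‖ * r ^ n * ‖f‖ := fun n f ↦
    calc ‖(L ^ n) (P f)‖ ≤ D * r ^ n * ‖P f‖ :=
          hgap n _ (apply_one_sub_smulRight_apply_eq_zero hμe f)
      _ ≤ D * r ^ n * (‖P‖ * ‖f‖) := by gcongr; exact P.le_opNorm f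
      _ = D * ‖P‖ * r ^ n * ‖f‖ := by ring
  have hsum := (summable_of_norm_apply_le_geometric (by positivity) hr0 hr1 hbound).hasSum
  simpa [P, one_sub_smulRight_apply_of_eq_zero e hh] using
    (ContinuousLinearMap.apply 𝕜 X h).hasSum hsum

theorem setOf_coboundary_add_smul_eq_preimage {T K : X →L[𝕜] X} {μ : X →L[𝕜] 𝕜} {e : X}
    (hμT : ∀ f, μ (T f) = μ f) (hμe : μ e = 1) (hTe : T e = e)
    (hK : ∀ g, μ g = 0 → K (g - T g) = -g) :
    {f : X | ∃ (g : X) (c : 𝕜), f = g - T g + c • e} =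
      ((1 - μ.smulRight e + (1 - T) * K * (1 - μ.smulRight e) : X →L[𝕜] X) ⁻¹' {0}) := by
  set P : X →L[𝕜] X := 1 - μ.smulRight e
  ext f
  simp only [Set.mem_ofPred_eq, Set.mem_preimage, Set.mem_singleton_iff]
  constructor
  · rintro ⟨g, c, rfl⟩
    have hPf : P (g - T g + c • e) = P g - T (P g) := by
      simp [P, hμT, hμe, hTe]
    simp [hPf, hK (P g) (apply_one_sub_smulRight_apply_eq_zero hμe g)]
  · intro hf
    refine ⟨-K (P f), μ f, ?_⟩
    have hPf : P f = f - μ f • e := rfl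
    have hΦf : P f + (K (P f) - T (K (P f))) = 0 := by simpa using hf
    generalize K (P f) = k at hΦf ⊢
    rw [hPf] at hΦf
    rw [map_neg]
    linear_combination (norm := module) hΦf

end

theorem coboundaries_plus_constants_closed_general
    {X : Type*} [NormedAddCommGroup X] [NormedSpace ℝ X] [CompleteSpace X]
    (L Tc : X →L[ℝ] X) (μ : X →L[ℝ] ℝ) (e : X)
    (hμT : ∀ f : X, μ (Tc f) = μ f)
    (hleft : ∀ f : X, L (Tc f) = f)
    (hμe : μ e = 1) (hTe : Tc e = e)
    (D δ : ℝ) (hD : 0 < D) (hδ0 : 0 < δ) (hδ1 : δ < 1)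
    (hgap : ∀ (n : ℕ) (f : X), μ f = 0 → ‖(L ^ n) f‖ ≤ D * (1 - δ) ^ n * ‖f‖) :
    IsClosed {f : X | ∃ (g : X) (c : ℝ), f = g - Tc g + c • e} := by
  set R : X →L[ℝ] X := ∑' n : ℕ, L ^ n * (1 - μ.smulRight e)
  have hR : ∀ h, μ h = 0 → HasSum (fun n ↦ (L ^ n) h) (R h) :=
    fun h ↦ hasSum_pow_apply_of_norm_pow_le hμe hD.le (by linarith) (by linarith) hgap
  have hLR : ∀ g, μ g = 0 → (L * R) (g - Tc g) = -g := by
    intro g hg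
    have hTg : μ (Tc g) = 0 := (hμT g).trans hg
    have hsum := hR (g - Tc g) (by rw [map_sub, hTg, hg, sub_zero])
    rw [mul_apply_eq_comp, ← hsum.tsum_eq,
      tsum_pow_apply_sub_eq_neg hleft hsum.summable (hR _ hTg).summable.tendsto_atTop_zero,
      map_neg, hleft]
  rw [setOf_coboundary_add_smul_eq_preimage hμT hμe hTe hLR]
  exact isClosed_singleton.preimage (ContinuousLinearMap.continuous _)

/-- the subspace C = {g - g∘T + c} of coboundaries plus constants is
closed in X(Ω). `Tc` is the composition operator, `L` the normalized transfer
operator, `e` the constant function 1, `μ` the Gibbs measure functional. -/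
theorem coboundaries_plus_constants_closed
    {X : Type*} [NormedAddCommGroup X] [NormedSpace ℝ X] [CompleteSpace X]
    (L Tc : X →L[ℝ] X) (μ : X →L[ℝ] ℝ) (e : X)
    (hμL : ∀ f : X, μ (L f) = μ f)
    (hμT : ∀ f : X, μ (Tc f) = μ f)
    (hleft : ∀ f : X, L (Tc f) = f)
    (hμe : μ e = 1) (hLe : L e = e) (hTe : Tc e = e)
    (D δ : ℝ) (hD : 0 < D) (hδ0 : 0 < δ) (hδ1 : δ < 1)
    (hgap : ∀ (n : ℕ) (f : X), μ f = 0 → ‖(L ^ n) f‖ ≤ D * (1 - δ) ^ n * ‖f‖) :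
    IsClosed {f : X | ∃ (g : X) (c : ℝ), f = g - Tc g + c • e} :=
  coboundaries_plus_constants_closed_general L Tc μ e hμT hleft hμe hTe D δ hD hδ0 hδ1 hgap
end

section
/- If A is a normalized potential with spectral gap, then ker L_A and C = {g − g∘T + c} are closed topological complements in X(Ω): X(Ω) = ker L_A ⊕ C. -/
/-!
Let `R f = f - μ f • e` be the projection onto `ker μ`. The spectral gap makes `S = ∑ₙ Lⁿ R`
converge, and `S = R + L S`, so `g = -S (L f)` solves `(1 - L) g = μ f • e - L f`. This writes
every `f` as `P f + (g - Tc g) + μ f • e` with `P` continuous and `L (P f) = 0`. Conversely, if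
`g - Tc g + c • e` lies in `ker L`, applying `μ` gives `c = 0`, so `L g = g`; the gap leaves no
fixed point of `L` in `ker μ` but `0`, hence `g` is a multiple of the fixed vector `e` and the
element vanishes. So the sum is direct, and the coboundary space is `ker P`, hence closed.
-/

open Filter Topology

section SpectralGap

variable {𝕜 X : Type*} [NontriviallyNormedField 𝕜] [NormedAddCommGroup X] [NormedSpace 𝕜 X]
  {L : X →L[𝕜] X} {μ : X →L[𝕜] 𝕜} {D r : ℝ}

theorem tendsto_pow_apply_of_gap (hr0 : 0 ≤ r) (hr1 : r < 1)
    (hgap : ∀ (n : ℕ) (f : X), μ f = 0 → ‖(L ^ n) f‖ ≤ D * r ^ n * ‖f‖) {f : X} (hf : μ f = 0) :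
    Tendsto (fun n ↦ (L ^ n) f) atTop (𝓝 0) := by
  refine squeeze_zero_norm (fun n ↦ hgap n f hf) ?_
  simpa using ((tendsto_pow_atTop_nhds_zero_of_lt_one hr0 hr1).const_mul D).mul_const ‖f‖

theorem eq_zero_of_apply_eq_self_of_gap (hr0 : 0 ≤ r) (hr1 : r < 1)
    (hgap : ∀ (n : ℕ) (f : X), μ f = 0 → ‖(L ^ n) f‖ ≤ D * r ^ n * ‖f‖) {f : X} (hf : μ f = 0)
    (hLf : L f = f) : f = 0 := by
  have hfix : ∀ n : ℕ, (L ^ n) f = f := by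
    intro n
    induction n with
    | zero => rfl
    | succ n ih => rw [pow_succ, mul_apply_eq_comp, hLf, ih]
  refine tendsto_nhds_unique ?_ (tendsto_pow_apply_of_gap hr0 hr1 hgap hf)
  simp only [hfix, tendsto_const_nhds]

theorem summable_pow_comp_of_gap [CompleteSpace X] {Y : Type*} [NormedAddCommGroup Y]
    [NormedSpace 𝕜 Y] (hD : 0 ≤ D) (hr0 : 0 ≤ r) (hr1 : r < 1)
    (hgap : ∀ (n : ℕ) (f : X), μ f = 0 → ‖(L ^ n) f‖ ≤ D * r ^ n * ‖f‖) (R : Y →L[𝕜] X)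
    (hR : ∀ y, μ (R y) = 0) : Summable fun n : ℕ ↦ (L ^ n).comp R := by
  refine .of_norm_bounded ((summable_geometric_of_lt_one hr0 hr1).mul_left (D * ‖R‖)) fun n ↦ ?_
  refine ContinuousLinearMap.opNorm_le_bound _ (by positivity) fun y ↦ ?_
  calc ‖(L ^ n) (R y)‖ ≤ D * r ^ n * ‖R y‖ := hgap n _ (hR y)
    _ ≤ D * r ^ n * (‖R‖ * ‖y‖) := by gcongr; exact R.le_opNorm y
    _ = D * ‖R‖ * r ^ n * ‖y‖ := by ring

end SpectralGap

theorem ContinuousLinearMap.tsum_pow_comp_eq_add {𝕜 X Y : Type*} [NontriviallyNormedField 𝕜]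
    [NormedAddCommGroup X] [NormedSpace 𝕜 X] [NormedAddCommGroup Y] [NormedSpace 𝕜 Y]
    (L : X →L[𝕜] X) {R : Y →L[𝕜] X} (h : Summable fun n : ℕ ↦ (L ^ n).comp R) :
    ∑' n : ℕ, (L ^ n).comp R = R + L.comp (∑' n : ℕ, (L ^ n).comp R) := by
  have hL : L.comp (∑' n : ℕ, (L ^ n).comp R) = ∑' n : ℕ, (L ^ (n + 1)).comp R := by
    simpa [pow_succ', mul_def, comp_assoc] using (compL 𝕜 Y X X L).map_tsum h
  rw [hL, h.tsum_eq_zero_add, pow_zero, one_def, id_comp]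

section Decomposition

variable {𝕜 X : Type*} [NontriviallyNormedField 𝕜] [NormedAddCommGroup X] [NormedSpace 𝕜 X]

def coboundariesAndConstants (Tc : X →L[𝕜] X) (e : X) : Submodule 𝕜 X :=
  LinearMap.range ((ContinuousLinearMap.id 𝕜 X - Tc : X →L[𝕜] X) : X →ₗ[𝕜] X)
    ⊔ Submodule.span 𝕜 {e}

variable (L Tc : X →L[𝕜] X) (μ : X →L[𝕜] 𝕜) (e : X)

theorem mem_coboundariesAndConstants {f : X} :
    f ∈ coboundariesAndConstants Tc e ↔ ∃ (g : X) (c : 𝕜), g - Tc g + c • e = f := by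
  simp only [coboundariesAndConstants, Submodule.mem_sup, LinearMap.mem_range,
    Submodule.mem_span_singleton]
  constructor
  · rintro ⟨_, ⟨g, rfl⟩, _, ⟨c, rfl⟩, rfl⟩
    exact ⟨g, c, rfl⟩
  · rintro ⟨g, c, rfl⟩
    exact ⟨_, ⟨g, rfl⟩, _, ⟨c, rfl⟩, rfl⟩

theorem disjoint_ker_coboundariesAndConstants (hleft : ∀ f, L (Tc f) = f)
    (hμL : ∀ f, μ (L f) = μ f) (hμe : μ e = 1) (hLe : L e = e) (hTe : Tc e = e)
    (hfix : ∀ f, μ f = 0 → L f = f → f = 0) :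
    Disjoint (LinearMap.ker (L : X →ₗ[𝕜] X)) (coboundariesAndConstants Tc e) := by
  rw [Submodule.disjoint_def]
  rintro _ hker hC
  obtain ⟨g, c, rfl⟩ := (mem_coboundariesAndConstants Tc e).mp hC
  have hk : L g - g + c • e = 0 := by simpa [hleft, hLe] using hker
  have hc : c = 0 := by simpa [hμL, hμe] using congrArg μ hk
  have hLg : L g = g := by simpa [hc, sub_eq_zero] using hk
  have hg : g = μ g • e := sub_eq_zero.mp <| hfix _ (by simp [hμe]) (by simp [hLg, hLe])
  rw [hc, hg]
  simp [hTe]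

open ContinuousLinearMap in
theorem exists_mapsTo_ker_sub_mem_coboundariesAndConstants (hleft : ∀ f, L (Tc f) = f)
    (hμL : ∀ f, μ (L f) = μ f) (hLe : L e = e) {S : X →L[𝕜] X}
    (hS : S = ContinuousLinearMap.id 𝕜 X - μ.smulRight e + L.comp S) :
    ∃ P : X →L[𝕜] X, (∀ f, P f ∈ LinearMap.ker (L : X →ₗ[𝕜] X)) ∧
      ∀ f, f - P f ∈ coboundariesAndConstants Tc e := by
  refine ⟨ContinuousLinearMap.id 𝕜 X + (ContinuousLinearMap.id 𝕜 X - Tc).comp (S.comp L)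
    - μ.smulRight e, fun f ↦ ?_, fun f ↦ ?_⟩
  · have h := congrArg (· (L f)) hS
    simp only [add_apply, sub_apply, ContinuousLinearMap.id_apply, smulRight_apply, comp_apply,
      hμL] at h
    simp only [LinearMap.mem_ker, coe_coe, add_apply, sub_apply, ContinuousLinearMap.id_apply,
      smulRight_apply, comp_apply, map_add, map_sub, map_smul, hleft, hLe]
    linear_combination (norm := module) -h
  · refine (mem_coboundariesAndConstants Tc e).mpr ⟨-S (L f), μ f, ?_⟩
    simp only [add_apply, sub_apply, ContinuousLinearMap.id_apply, smulRight_apply, comp_apply,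
      map_neg]
    abel

end Decomposition

theorem isClosed_and_isCompl_of_forall_sub_mem {R M : Type*} [Ring R] [AddCommGroup M]
    [Module R M] [TopologicalSpace M] [T1Space M] {K C : Submodule R M} (P : M →L[R] M)
    (hPK : ∀ x, P x ∈ K) (hPC : ∀ x, x - P x ∈ C) (hKC : Disjoint K C) :
    IsClosed (C : Set M) ∧ IsCompl K C := by
  have hC : (C : Set M) = P ⁻¹' {0} := by
    ext x
    refine ⟨fun hx ↦ Submodule.disjoint_def.mp hKC _ (hPK x) ?_, fun hx ↦ ?_⟩
    · simpa using C.sub_mem hx (hPC x)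
    · simpa [show P x = 0 from hx] using hPC x
  refine ⟨hC ▸ isClosed_singleton.preimage P.continuous, hKC, codisjoint_iff_le_sup.mpr ?_⟩
  intro x _
  simpa using Submodule.add_mem_sup (hPK x) (hPC x)

theorem ker_transfer_compl_coboundaries_general
    {X : Type*} [NormedAddCommGroup X] [NormedSpace ℝ X] [CompleteSpace X]
    (L Tc : X →L[ℝ] X) (μ : X →L[ℝ] ℝ) (e : X)
    (hμL : ∀ f : X, μ (L f) = μ f)
    (hleft : ∀ f : X, L (Tc f) = f)
    (hμe : μ e = 1) (hLe : L e = e) (hTe : Tc e = e)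
    (D δ : ℝ) (hD : 0 < D) (hδ0 : 0 < δ) (hδ1 : δ < 1)
    (hgap : ∀ (n : ℕ) (f : X), μ f = 0 → ‖(L ^ n) f‖ ≤ D * (1 - δ) ^ n * ‖f‖) :
    IsClosed ((LinearMap.range ((ContinuousLinearMap.id ℝ X - Tc : X →L[ℝ] X) : X →ₗ[ℝ] X)
        ⊔ Submodule.span ℝ {e} : Submodule ℝ X) : Set X) ∧
    IsCompl (LinearMap.ker ((L : X →L[ℝ] X) : X →ₗ[ℝ] X))
      (LinearMap.range ((ContinuousLinearMap.id ℝ X - Tc : X →L[ℝ] X) : X →ₗ[ℝ] X)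
        ⊔ Submodule.span ℝ {e}) := by
  have hr0 : 0 ≤ 1 - δ := by linarith
  have hr1 : 1 - δ < 1 := by linarith
  have hsum := summable_pow_comp_of_gap hD.le hr0 hr1 hgap
    (ContinuousLinearMap.id ℝ X - μ.smulRight e) fun f ↦ by simp [hμe]
  obtain ⟨P, hPker, hPC⟩ := exists_mapsTo_ker_sub_mem_coboundariesAndConstants L Tc μ e hleft hμL
    hLe (L.tsum_pow_comp_eq_add hsum)
  exact isClosed_and_isCompl_of_forall_sub_mem P hPker hPC <|
    disjoint_ker_coboundariesAndConstants L Tc μ e hleft hμL hμe hLe hTe fun _ hf hLf ↦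
      eq_zero_of_apply_eq_self_of_gap hr0 hr1 hgap hf hLf

/-- ker L_A and C = {g - g∘T + c} are closed topological
complements in X(Ω). -/
theorem ker_transfer_compl_coboundaries
    {X : Type*} [NormedAddCommGroup X] [NormedSpace ℝ X] [CompleteSpace X]
    (L Tc : X →L[ℝ] X) (μ : X →L[ℝ] ℝ) (e : X)
    (hμL : ∀ f : X, μ (L f) = μ f)
    (hμT : ∀ f : X, μ (Tc f) = μ f)
    (hleft : ∀ f : X, L (Tc f) = f)
    (hμe : μ e = 1) (hLe : L e = e) (hTe : Tc e = e)
    (D δ : ℝ) (hD : 0 < D) (hδ0 : 0 < δ) (hδ1 : δ < 1)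
    (hgap : ∀ (n : ℕ) (f : X), μ f = 0 → ‖(L ^ n) f‖ ≤ D * (1 - δ) ^ n * ‖f‖) :
    IsClosed ((LinearMap.range ((ContinuousLinearMap.id ℝ X - Tc : X →L[ℝ] X) : X →ₗ[ℝ] X)
        ⊔ Submodule.span ℝ {e} : Submodule ℝ X) : Set X) ∧
    IsCompl (LinearMap.ker ((L : X →L[ℝ] X) : X →ₗ[ℝ] X))
      (LinearMap.range ((ContinuousLinearMap.id ℝ X - Tc : X →L[ℝ] X) : X →ₗ[ℝ] X)
        ⊔ Submodule.span ℝ {e}) :=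
  ker_transfer_compl_coboundaries_general L Tc μ e hμL hleft hμe hLe hTe D δ hD hδ0 hδ1 hgap
end

section
/- For the two-state Markov chain with matrix S(x,y) and stationary vector π = ((1−y)/(2−x−y), (1−x)/(2−x−y)), and a tangent vector ζ given by ζ₁₁ = ψ₁/x, ζ₂₁ = −ψ₁/(1−x), ζ₁₂ = −ψ₂/(1−y), ζ₂₂ = ψ₂/y, the weighted sum ∑_{i,j} ζ_{ij}² μ(ij) with μ(11)=xπ₁, μ(21)=(1−x)π₁, μ(12)=(1−y)π₂, μ(22)=yπ₂ equals (1/(2−x−y)) · ( (1−y)/(x(1−x)) ψ₁² + (1−x)/(y(1−y)) ψ₂² ). -/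
/-- explicit computation of the variance metric on two-state Markov
chains: ∑_{ij} ζ_{ij}² μ(ij) = (1/(2-x-y))·((1-y)/(x(1-x)) ψ₁² + (1-x)/(y(1-y)) ψ₂²). -/
theorem variance_metric_two_state
    (x y : ℝ) (hx : x ∈ Set.Ioo (0 : ℝ) 1) (hy : y ∈ Set.Ioo (0 : ℝ) 1)
    (ψ₁ ψ₂ : ℝ) :
    (ψ₁ / x) ^ 2 * (x * ((1 - y) / (2 - x - y)))
      + (-ψ₁ / (1 - x)) ^ 2 * ((1 - x) * ((1 - y) / (2 - x - y)))
      + (-ψ₂ / (1 - y)) ^ 2 * ((1 - y) * ((1 - x) / (2 - x - y)))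
      + (ψ₂ / y) ^ 2 * (y * ((1 - x) / (2 - x - y)))
    = (1 / (2 - x - y)) *
        ((1 - y) / (x * (1 - x)) * ψ₁ ^ 2 + (1 - x) / (y * (1 - y)) * ψ₂ ^ 2) := by
  obtain ⟨hx0, hx1⟩ := hx
  obtain ⟨hy0, hy1⟩ := hy
  have h1 : x ≠ 0 := ne_of_gt hx0
  have h2 : (1 - x) ≠ 0 := by linarith
  have h3 : y ≠ 0 := ne_of_gt hy0
  have h4 : (1 - y) ≠ 0 := by linarith
  have h5 : (2 - x - y) ≠ 0 := by nlinarith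
  field_simp
  ring
end

section
/- The Gaussian curvature of the Riemannian metric g = diag( (1−y)/(x(1−x)(2−x−y)), (1−x)/(y(1−y)(2−x−y)) ) on the open square (0,1)² equals K(x,y) = 1/(2−x−y); in particular K > 1/2 everywhere, so the metric has curvature bounded below away from zero. -/
/-! With s = 2 - x - y one has E G = 1 / (x y s²), so √(EG) = 1 / (√x √y s) and
E_y / √(EG) = -√y / (√x s), whose y-derivative is -(s + 2y) / (2 √x √y s²).
Since G(x, y) = E(y, x), the second bracket is the first with x and y exchanged, giving
-(s + 2x) / (2 √x √y s²). The brackets add up to -2 / (√x √y s²), and multiplying by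
-√x √y s / 2 leaves 1 / s. -/

/-- The coefficient E of the variance metric. -/
noncomputable def Emetric (x y : ℝ) : ℝ := (1 - y) / (x * (1 - x) * (2 - x - y))

/-- The coefficient G of the variance metric. -/
noncomputable def Gmetric (x y : ℝ) : ℝ := (1 - x) / (y * (1 - y) * (2 - x - y))

open Real Set Topology

lemma Gmetric_eq_Emetric (x y : ℝ) : Gmetric x y = Emetric y x := by
  rw [Gmetric, Emetric, sub_right_comm 2 x y]

lemma hasDerivAt_Emetric_snd {x y : ℝ} (hx₀ : x ≠ 0) (hx₁ : x ≠ 1)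
    (hs : 2 - x - y ≠ 0) :
    HasDerivAt (Emetric x) (-1 / (x * (2 - x - y) ^ 2)) y := by
  have hne : x * (1 - x) * (2 - x - y) ≠ 0 :=
    mul_ne_zero (mul_ne_zero hx₀ (sub_ne_zero.mpr (Ne.symm hx₁))) hs
  have hden : HasDerivAt (fun t => x * (1 - x) * (2 - x - t)) (x * (1 - x) * -1) y :=
    ((hasDerivAt_id' y).const_sub (2 - x)).const_mul (x * (1 - x))
  refine (((hasDerivAt_id' y).const_sub 1).div hden hne).congr_deriv ?_
  field_simp
  ring

lemma sqrt_Emetric_mul_Gmetric {x y : ℝ} (hx : x ∈ Ioo 0 1) (hy : y ∈ Ioo 0 1) :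
    √(Emetric x y * Gmetric x y) = (√x * √y * (2 - x - y))⁻¹ := by
  obtain ⟨hx₀, hx₁⟩ := hx
  obtain ⟨hy₀, hy₁⟩ := hy
  have hs : 0 < 2 - x - y := by linarith
  have hEG : Emetric x y * Gmetric x y = ((√x * √y * (2 - x - y))⁻¹) ^ 2 := by
    have h1x : (1 : ℝ) - x ≠ 0 := by linarith
    have h1y : (1 : ℝ) - y ≠ 0 := by linarith
    rw [inv_pow, mul_pow, mul_pow, sq_sqrt hx₀.le, sq_sqrt hy₀.le, Emetric, Gmetric]
    field_simp
  rw [hEG, sqrt_sq (by positivity)]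

lemma deriv_Emetric_snd_div_sqrt {x y : ℝ} (hx : x ∈ Ioo 0 1) (hy : y ∈ Ioo 0 1) :
    deriv (fun t => Emetric x t) y / √(Emetric x y * Gmetric x y)
      = -(√y / (√x * (2 - x - y))) := by
  have hs : 0 < 2 - x - y := by linarith [hx.2, hy.2]
  have hsx : 0 < √x := sqrt_pos.mpr hx.1
  have hxx : √x ^ 2 = x := sq_sqrt hx.1.le
  rw [(hasDerivAt_Emetric_snd hx.1.ne' hx.2.ne hs.ne').deriv, sqrt_Emetric_mul_Gmetric hx hy]
  field_simp
  rw [hxx, mul_div_cancel_left₀ _ hx.1.ne']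

lemma deriv_deriv_Emetric_snd_div_sqrt {x y : ℝ} (hx : x ∈ Ioo 0 1) (hy : y ∈ Ioo 0 1) :
    deriv (fun y' => deriv (fun t => Emetric x t) y' / √(Emetric x y' * Gmetric x y')) y
      = -(2 - x + y) / (2 * √x * √y * (2 - x - y) ^ 2) := by
  have hs : 0 < 2 - x - y := by linarith [hx.2, hy.2]
  have hsx : 0 < √x := sqrt_pos.mpr hx.1
  have hsy : 0 < √y := sqrt_pos.mpr hy.1
  have hlocal : (fun y' => deriv (fun t => Emetric x t) y' / √(Emetric x y' * Gmetric x y'))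
      =ᶠ[𝓝 y] fun y' => -(√y' / (√x * (2 - x - y'))) := by
    filter_upwards [isOpen_Ioo.mem_nhds hy] with y' hy'
    exact deriv_Emetric_snd_div_sqrt hx hy'
  have hyy : √y ^ 2 = y := sq_sqrt hy.1.le
  have hden : HasDerivAt (fun y' => √x * (2 - x - y')) (√x * -1) y :=
    ((hasDerivAt_id' y).const_sub (2 - x)).const_mul √x
  rw [hlocal.deriv_eq]
  refine ((hasDerivAt_sqrt hy.1.ne').div hden (by positivity)).neg.deriv.trans ?_
  field_simp
  rw [hyy]
  ring

lemma deriv_deriv_Gmetric_fst_div_sqrt {x y : ℝ} (hx : x ∈ Ioo 0 1) (hy : y ∈ Ioo 0 1) :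
    deriv (fun x' => deriv (fun t => Gmetric t y) x' / √(Emetric x' y * Gmetric x' y)) x
      = -(2 - y + x) / (2 * √y * √x * (2 - y - x) ^ 2) := by
  have hswap : (fun x' => deriv (fun t => Gmetric t y) x' / √(Emetric x' y * Gmetric x' y))
      = fun x' => deriv (fun t => Emetric y t) x' / √(Emetric y x' * Gmetric y x') := by
    funext x'
    simp only [Gmetric_eq_Emetric]
    rw [mul_comm (Emetric x' y)]
  rw [hswap]
  exact deriv_deriv_Emetric_snd_div_sqrt hy hx

/-- the Gaussian curvature
K = -(1/(2√(EG)))·[(E_y/√(EG))_y + (G_x/√(EG))_x] of the metric diag(E,G) on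
(0,1)² equals 1/(2-x-y), which is everywhere > 1/2. -/
theorem curvature_variance_metric
    (x y : ℝ) (hx : x ∈ Set.Ioo (0 : ℝ) 1) (hy : y ∈ Set.Ioo (0 : ℝ) 1) :
    -(1 / (2 * Real.sqrt (Emetric x y * Gmetric x y))) *
      (deriv (fun y' => deriv (fun t => Emetric x t) y'
          / Real.sqrt (Emetric x y' * Gmetric x y')) y
       + deriv (fun x' => deriv (fun t => Gmetric t y) x'
          / Real.sqrt (Emetric x' y * Gmetric x' y)) x)
      = 1 / (2 - x - y) ∧
    1 / 2 < 1 / (2 - x - y) := by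
  have hs : 0 < 2 - x - y := by linarith [hx.2, hy.2]
  have hsx : 0 < √x := sqrt_pos.mpr hx.1
  have hsy : 0 < √y := sqrt_pos.mpr hy.1
  refine ⟨?_, one_div_lt_one_div_of_lt hs (by linarith [hx.1, hy.1])⟩
  rw [sqrt_Emetric_mul_Gmetric hx hy, deriv_deriv_Emetric_snd_div_sqrt hx hy,
    deriv_deriv_Gmetric_fst_div_sqrt hx hy, sub_right_comm 2 y x]
  field_simp
  ring
end
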